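/- arXiv:1909.07816 — 2 statements merged into one kernel-verified Lean document; each statement's English description precedes it below -/
import Mathlib

section
/- Given a CNF formula φ and the formula φ' obtained by replacing a variable x appearing in k clauses with fresh variables x_1^T, x_1^F, ..., x_k^T, x_k^F, adding the equality-chain clauses (x_i^T ∨ x_i^F), (¬x_i^T ∨ ¬x_i^F), (x_i^F ∨ x_{i+1}^T), (¬x_i^F ∨ ¬x_{i+1}^T), and substituting the i-th occurrence of x by x_i^T: φ is satisfiable if and only if φ' is satisfiable. -/
/-- An assignment satisfies a CNF formula over variable type W. -/
def Sat {W : Type} (α : W → Bool) (φ : List (List (W × Bool))) : Prop :=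
  ∀ c ∈ φ, ∃ l ∈ c, α l.1 = l.2

/-- Substitute one literal: the c-th occurrence of x becomes the fresh variable
    x_c^T (encoded `Sum.inr (c, true)`), other variables are kept (`Sum.inl`). -/
def substLit (x : ℕ) (c : ℕ) (l : ℕ × Bool) : ((ℕ ⊕ ℕ × Bool) × Bool) × ℕ :=
  if l.1 = x then ((Sum.inr (c, true), l.2), c + 1) else ((Sum.inl l.1, l.2), c)

/-- Substitute the occurrences of x in a clause, threading the occurrence counter. -/
def substClause (x : ℕ) : ℕ → List (ℕ × Bool) → List ((ℕ ⊕ ℕ × Bool) × Bool) × ℕ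
  | c, [] => ([], c)
  | c, l :: ls =>
    let p := substLit x c l
    let q := substClause x p.2 ls
    (p.1 :: q.1, q.2)

/-- Substitute the occurrences of x throughout a CNF formula; the final counter
    is the number k of occurrences of x. -/
def substCNF (x : ℕ) : ℕ → List (List (ℕ × Bool)) → List (List ((ℕ ⊕ ℕ × Bool) × Bool)) × ℕ
  | c, [] => ([], c)
  | c, cl :: cls =>
    let p := substClause x c cl
    let q := substCNF x p.2 cls
    (p.1 :: q.1, q.2)

/-- The equality-chain clauses (x_i^T ∨ x_i^F), (¬x_i^T ∨ ¬x_i^F) for i < k and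
    (x_i^F ∨ x_{i+1}^T), (¬x_i^F ∨ ¬x_{i+1}^T) for i + 1 < k. -/
def chainClauses (k : ℕ) : List (List ((ℕ ⊕ ℕ × Bool) × Bool)) :=
  ((List.range k).map fun i => [(Sum.inr (i, true), true), (Sum.inr (i, false), true)]) ++
  ((List.range k).map fun i => [(Sum.inr (i, true), false), (Sum.inr (i, false), false)]) ++
  ((List.range (k - 1)).map fun i => [(Sum.inr (i, false), true), (Sum.inr (i + 1, true), true)]) ++
  ((List.range (k - 1)).map fun i => [(Sum.inr (i, false), false), (Sum.inr (i + 1, true), false)])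

lemma sat_append {W : Type} (β : W → Bool) (A B : List (List (W × Bool))) :
    Sat β (A ++ B) ↔ Sat β A ∧ Sat β B := by
  simp [Sat, List.mem_append, or_imp, forall_and]

lemma substClause_le (x c : ℕ) (cl : List (ℕ × Bool)) : c ≤ (substClause x c cl).2 := by
  induction cl generalizing c with
  | nil => simp [substClause]
  | cons l ls ih =>
    simp only [substClause]
    refine le_trans ?_ (ih (substLit x c l).2)
    by_cases h : l.1 = x <;> simp [substLit, h]

lemma substCNF_le (x c : ℕ) (φ : List (List (ℕ × Bool))) : c ≤ (substCNF x c φ).2 := by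
  induction φ generalizing c with
  | nil => simp [substCNF]
  | cons cl cls ih =>
    simp only [substCNF]
    exact le_trans (substClause_le x c cl) (ih _)

lemma substClause_mem (x c : ℕ) (cl : List (ℕ × Bool)) (l : (ℕ ⊕ ℕ × Bool) × Bool)
    (hl : l ∈ (substClause x c cl).1) :
    (∃ v, v ≠ x ∧ l.1 = Sum.inl v) ∨
    ∃ i, c ≤ i ∧ i < (substClause x c cl).2 ∧ l.1 = Sum.inr (i, true) := by
  induction cl generalizing c with
  | nil => simp [substClause] at hl
  | cons a ls ih =>
    simp only [substClause, List.mem_cons] at hl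
    rcases hl with h | h
    · by_cases hx : a.1 = x
      · right
        refine ⟨c, le_refl c, ?_, ?_⟩
        · simp only [substClause]
          have := substClause_le x (substLit x c a).2 ls
          simp [substLit, hx] at this ⊢
          omega
        · subst h; simp [substLit, hx]
      · left
        exact ⟨a.1, hx, by subst h; simp [substLit, hx]⟩
    · rcases ih (substLit x c a).2 h with h' | ⟨i, hi1, hi2, hi3⟩
      · left; exact h'
      · right
        refine ⟨i, ?_, ?_, hi3⟩
        · refine le_trans ?_ hi1
          by_cases hx : a.1 = x <;> simp [substLit, hx]
        · simpa [substClause] using hi2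

lemma substCNF_mem (x c : ℕ) (φ : List (List (ℕ × Bool))) (cl : List ((ℕ ⊕ ℕ × Bool) × Bool))
    (hcl : cl ∈ (substCNF x c φ).1) (l : (ℕ ⊕ ℕ × Bool) × Bool) (hl : l ∈ cl) :
    (∃ v, v ≠ x ∧ l.1 = Sum.inl v) ∨
    ∃ i, i < (substCNF x c φ).2 ∧ l.1 = Sum.inr (i, true) := by
  induction φ generalizing c with
  | nil => simp [substCNF] at hcl
  | cons a cls ih =>
    simp only [substCNF, List.mem_cons] at hcl
    rcases hcl with h | h
    · subst h
      rcases substClause_mem x c a l hl with h' | ⟨i, _, hi2, hi3⟩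
      · left; exact h'
      · right
        refine ⟨i, ?_, hi3⟩
        have := substCNF_le x (substClause x c a).2 cls
        simp only [substCNF]
        omega
    · rcases ih _ h with h' | ⟨i, hi2, hi3⟩
      · left; exact h'
      · right
        exact ⟨i, by simpa [substCNF] using hi2, hi3⟩

lemma substClause_sat (x : ℕ) (α : ℕ → Bool) (β : (ℕ ⊕ ℕ × Bool) → Bool)
    (h1 : ∀ v, v ≠ x → β (Sum.inl v) = α v)
    (h2 : ∀ i, β (Sum.inr (i, true)) = α x) (c : ℕ) (cl : List (ℕ × Bool)) :
    (∃ l ∈ cl, α l.1 = l.2) ↔ (∃ l ∈ (substClause x c cl).1, β l.1 = l.2) := by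
  induction cl generalizing c with
  | nil => simp [substClause]
  | cons a ls ih =>
    have hlit : (β (substLit x c a).1.1 = (substLit x c a).1.2) ↔ (α a.1 = a.2) := by
      by_cases hx : a.1 = x
      · simp [substLit, hx, h2]
      · simp [substLit, hx, h1 _ hx]
    simp only [substClause, List.mem_cons, exists_eq_or_imp]
    rw [hlit, ih]

lemma substCNF_sat (x : ℕ) (α : ℕ → Bool) (β : (ℕ ⊕ ℕ × Bool) → Bool)
    (h1 : ∀ v, v ≠ x → β (Sum.inl v) = α v)
    (h2 : ∀ i, β (Sum.inr (i, true)) = α x) (c : ℕ) (φ : List (List (ℕ × Bool))) :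
    Sat α φ ↔ Sat β (substCNF x c φ).1 := by
  induction φ generalizing c with
  | nil => simp [Sat, substCNF]
  | cons a cls ih =>
    simp only [Sat, substCNF, List.mem_cons, forall_eq_or_imp]
    rw [← substClause_sat x α β h1 h2 c a]
    constructor
    · rintro ⟨h, hrest⟩
      exact ⟨h, (ih _).mp hrest⟩
    · rintro ⟨h, hrest⟩
      exact ⟨h, (ih _).mpr hrest⟩

lemma chain_eq (β : (ℕ ⊕ ℕ × Bool) → Bool) (k : ℕ) (h : Sat β (chainClauses k)) :
    ∀ i, i < k → β (Sum.inr (i, true)) = β (Sum.inr (0, true)) := by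
  have hTF : ∀ i, i < k → β (Sum.inr (i, true)) = true ∨ β (Sum.inr (i, false)) = true := by
    intro i hi
    have := h [(Sum.inr (i, true), true), (Sum.inr (i, false), true)]
      (by unfold chainClauses
          exact List.mem_append_left _ (List.mem_append_left _ (List.mem_append_left _
            (List.mem_map.2 ⟨i, List.mem_range.2 hi, rfl⟩))))
    simpa using this
  have hTF' : ∀ i, i < k → β (Sum.inr (i, true)) = false ∨ β (Sum.inr (i, false)) = false := by
    intro i hi
    have := h [(Sum.inr (i, true), false), (Sum.inr (i, false), false)]
      (by unfold chainClauses
          exact List.mem_append_left _ (List.mem_append_left _ (List.mem_append_right _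
            (List.mem_map.2 ⟨i, List.mem_range.2 hi, rfl⟩))))
    simpa using this
  have hFT : ∀ i, i + 1 < k → β (Sum.inr (i, false)) = true ∨ β (Sum.inr (i + 1, true)) = true := by
    intro i hi
    have := h [(Sum.inr (i, false), true), (Sum.inr (i + 1, true), true)]
      (by unfold chainClauses
          exact List.mem_append_left _ (List.mem_append_right _
            (List.mem_map.2 ⟨i, List.mem_range.2 (by omega), rfl⟩)))
    simpa using this
  have hFT' : ∀ i, i + 1 < k → β (Sum.inr (i, false)) = false ∨ β (Sum.inr (i + 1, true)) = false := by
    intro i hi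
    have := h [(Sum.inr (i, false), false), (Sum.inr (i + 1, true), false)]
      (by unfold chainClauses
          exact List.mem_append_right _
            (List.mem_map.2 ⟨i, List.mem_range.2 (by omega), rfl⟩))
    simpa using this
  intro i
  induction i with
  | zero => intro _; rfl
  | succ n ihn =>
    intro hn
    have h1 := ihn (by omega)
    have h2 := hTF n (by omega)
    have h3 := hTF' n (by omega)
    have h4 := hFT n (by omega)
    have h5 := hFT' n (by omega)
    rcases h2 with h2 | h2 <;> rcases h3 with h3 | h3 <;>
      rcases h4 with h4 | h4 <;> rcases h5 with h5 | h5 <;> simp_all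

/-- φ is satisfiable iff the formula φ' obtained by replacing the i-th occurrence
    of x with the fresh variable x_i^T and adding the equality-chain clauses is
    satisfiable. -/
theorem stmt_10 (φ : List (List (ℕ × Bool))) (x : ℕ) :
    (∃ α : ℕ → Bool, Sat α φ) ↔
    (∃ β : (ℕ ⊕ ℕ × Bool) → Bool,
      Sat β ((substCNF x 0 φ).1 ++ chainClauses (substCNF x 0 φ).2)) := by
  constructor
  · rintro ⟨α, hα⟩
    refine ⟨fun w => match w with
      | Sum.inl v => α v
      | Sum.inr (_, b) => if b then α x else !(α x), ?_⟩
    rw [sat_append]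
    constructor
    · exact (substCNF_sat x α _ (fun v _ => rfl) (fun i => by simp) 0 φ).mp hα
    · intro cl hcl
      simp only [chainClauses, List.mem_append, List.mem_map, List.mem_range] at hcl
      rcases hcl with ((⟨i, _, rfl⟩ | ⟨i, _, rfl⟩) | ⟨i, _, rfl⟩) | ⟨i, _, rfl⟩ <;>
        cases hax : α x <;> simp [hax]
  · rintro ⟨β, hβ⟩
    rw [sat_append] at hβ
    obtain ⟨hsub, hchain⟩ := hβ
    set k := (substCNF x 0 φ).2 with hk
    have heq := chain_eq β k hchain
    set t := β (Sum.inr (0, true)) with ht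
    refine ⟨fun v => if v = x then t else β (Sum.inl v), ?_⟩
    set β' : (ℕ ⊕ ℕ × Bool) → Bool := fun w => match w with
      | Sum.inl v => β (Sum.inl v)
      | Sum.inr (_, b) => if b then t else !t with hβ'
    have hsub' : Sat β' (substCNF x 0 φ).1 := by
      intro cl hcl
      obtain ⟨l, hl, hsat⟩ := hsub cl hcl
      refine ⟨l, hl, ?_⟩
      rcases substCNF_mem x 0 φ cl hcl l hl with ⟨v, _, hv⟩ | ⟨i, hi, hv⟩
      · rw [hv] at hsat ⊢; simpa [hβ'] using hsat
      · rw [hv] at hsat ⊢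
        simp only [hβ', if_pos rfl] at *
        rw [← heq i hi]; exact hsat
    refine (substCNF_sat x _ β' ?_ ?_ 0 φ).mpr hsub'
    · intro v hv; simp [hβ', hv]
    · intro i; simp [hβ']
end

section
/- Let a path in the game be the sequence of positions of the Lord, where at each turn the Lord moves to a position at distance at most d along the path, and an impatient Dragon starting 2 tiles behind always ends its turn 2 tiles behind the Lord along the path and attacks (killing the Lord) if the Lord is within distance d + 1 of the Dragon's previous position. Then the Lord survives t turns iff she moves exactly d tiles forward each turn; consequently the positions she occupies at ends of turns are exactly those at distances i·d along the path, i = 1, ..., t. -/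
/-- Corridor chase: the Lord starts at 0 and moves forward at most d per turn;
    the Dragon is always 2 tiles behind (at p n - 2 after turn n) and kills the
    Lord if she ends a turn within distance d + 1 of the Dragon's previous
    position.  The Lord survives t turns iff she advances exactly d each turn,
    and then her end-of-turn positions are exactly the multiples i·d, i ≤ t. -/
theorem stmt_11 (d : ℕ) (hd : 1 ≤ d) (t : ℕ) (p : ℕ → ℤ) (h0 : p 0 = 0)
    (hmove : ∀ n < t, p n ≤ p (n + 1) ∧ p (n + 1) ≤ p n + d) :
    ((∀ n < t, (d : ℤ) + 1 < p (n + 1) - (p n - 2)) ↔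
      (∀ n < t, p (n + 1) = p n + d)) ∧
    ((∀ n < t, (d : ℤ) + 1 < p (n + 1) - (p n - 2)) →
      ∀ n ≤ t, p n = n * d) := by
  have key : (∀ n < t, (d : ℤ) + 1 < p (n + 1) - (p n - 2)) ↔
      (∀ n < t, p (n + 1) = p n + d) := by
    constructor
    · intro h n hn
      have h1 := h n hn
      have h2 := (hmove n hn).2
      omega
    · intro h n hn
      have h1 := h n hn
      omega
  refine ⟨key, fun h n hn => ?_⟩
  have h' := key.mp h
  clear h key hmove
  induction n with
  | zero => simpa using h0
  | succ k ih =>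
    have hk : k < t := by omega
    have e1 := h' k hk
    have e2 := ih (by omega)
    push_cast
    rw [e1, e2]
    push_cast
    ring
end
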